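/- For any column vector ξ ∈ O², the octonionic Hermitian matrix ξ ⊗ ξ* = (conj(ξ_j) ξ_k)_{j,k} is nonnegative definite. -/

import Mathlib

noncomputable section

open Quaternion

/-- The octonions, as the Cayley–Dickson double of the quaternions. -/
@[ext] structure Octonion : Type where
  q1 : Quaternion ℝ
  q2 : Quaternion ℝ

namespace Octonion

def equivProd : Octonion ≃ Quaternion ℝ × Quaternion ℝ :=
  ⟨fun x => (x.q1, x.q2), fun p => ⟨p.1, p.2⟩, fun _ => rfl, fun _ => rfl⟩

instance : AddCommGroup Octonion := equivProd.addCommGroup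
instance : Module ℝ Octonion := equivProd.module ℝ
instance : TopologicalSpace Octonion :=
  TopologicalSpace.induced equivProd inferInstance

instance : One Octonion := ⟨⟨1, 0⟩⟩

/-- Cayley–Dickson multiplication: `(a,b)(c,d) = (ac - d̄b, da + b c̄)`. -/
instance : Mul Octonion :=
  ⟨fun x y => ⟨x.q1 * y.q1 - star y.q2 * x.q2, y.q2 * x.q1 + x.q2 * star y.q1⟩⟩

/-- Octonionic conjugation. -/
def conj (x : Octonion) : Octonion := ⟨star x.q1, -x.q2⟩

/-- The real part of an octonion. -/
def re (x : Octonion) : ℝ := x.q1.re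

/-- The imaginary part of an octonion. -/
def im (x : Octonion) : Octonion := (2⁻¹ : ℝ) • (x - conj x)

/-- The squared norm `|x|²` of an octonion. -/
def normSq (x : Octonion) : ℝ := Quaternion.normSq x.q1 + Quaternion.normSq x.q2

/-- The inverse of an octonion (junk value `0` at `0`). -/
def inv (x : Octonion) : Octonion := (normSq x)⁻¹ • conj x

end Octonion

namespace Octonion

/-- The Hermitian quadratic form `Re(ξ* A ξ)` of `A = [[a, x],[conj x, b]]` at `ξ = (ξ₁, ξ₂)`:
`a|ξ₁|² + b|ξ₂|² + 2 Re(conj(ξ₁) x ξ₂)`. -/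
def qform (a b : ℝ) (x : Octonion) (ξ₁ ξ₂ : Octonion) : ℝ :=
  a * normSq ξ₁ + b * normSq ξ₂ + 2 * re ((conj ξ₁ * x) * ξ₂)

/-- An octonionic Hermitian `2×2` matrix `[[d1, x],[conj x, d2]]`. -/
@[ext] structure Herm2 : Type where
  d1 : ℝ
  d2 : ℝ
  x : Octonion

namespace Herm2

instance : Add Herm2 := ⟨fun A B => ⟨A.d1 + B.d1, A.d2 + B.d2, A.x + B.x⟩⟩
instance : SMul ℝ Herm2 := ⟨fun r A => ⟨r * A.d1, r * A.d2, r • A.x⟩⟩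

/-- Nonnegative definiteness: `Re(ξ* A ξ) ≥ 0` for all `ξ ∈ O²`. -/
def PosSemidef (A : Herm2) : Prop := ∀ ξ₁ ξ₂ : Octonion, 0 ≤ qform A.d1 A.d2 A.x ξ₁ ξ₂

/-- Positive definiteness: `Re(ξ* A ξ) > 0` for all nonzero `ξ ∈ O²`. -/
def PosDef (A : Herm2) : Prop :=
  ∀ ξ₁ ξ₂ : Octonion, ¬(ξ₁ = 0 ∧ ξ₂ = 0) → 0 < qform A.d1 A.d2 A.x ξ₁ ξ₂

/-- The determinant `det A = ab - |x|²`. -/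
def det (A : Herm2) : ℝ := A.d1 * A.d2 - normSq A.x

/-- The mixed determinant `det(A,B) = (1/2)(a₁₁b₂₂ + a₂₂b₁₁ - 2 Re(a₁₂ b₂₁))`,
where `b₂₁ = conj(b₁₂)`. -/
def mixedDet (A B : Herm2) : ℝ :=
  (1 / 2) * (A.d1 * B.d2 + A.d2 * B.d1 - 2 * re (A.x * conj B.x))

end Herm2

end Octonion

/-! Cyclicity of the real part, `re ((ā x) b) = re (x (b ā))`, turns the cross term into
`re (x y)` with `x = conj ξ₁ * ξ₂` and `y = η₂ * conj η₁`. Cauchy–Schwarz for the real inner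
product `re (x y) = ⟪x̄, y⟫` (from `|t x̄ + y|² ≥ 0` for all real `t`) together with
multiplicativity of the octonion norm gives `re (x y)² ≤ (|ξ₁|²|η₁|²)(|ξ₂|²|η₂|²)`,
and AM–GM finishes. -/

namespace Octonion

@[simp] lemma mul_q1 (x y : Octonion) : (x * y).q1 = x.q1 * y.q1 - star y.q2 * x.q2 := rfl
@[simp] lemma mul_q2 (x y : Octonion) : (x * y).q2 = y.q2 * x.q1 + x.q2 * star y.q1 := rfl
@[simp] lemma add_q1 (x y : Octonion) : (x + y).q1 = x.q1 + y.q1 := rfl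
@[simp] lemma add_q2 (x y : Octonion) : (x + y).q2 = x.q2 + y.q2 := rfl
@[simp] lemma smul_q1 (t : ℝ) (x : Octonion) : (t • x).q1 = t • x.q1 := rfl
@[simp] lemma smul_q2 (t : ℝ) (x : Octonion) : (t • x).q2 = t • x.q2 := rfl
@[simp] lemma conj_q1 (x : Octonion) : (conj x).q1 = star x.q1 := rfl
@[simp] lemma conj_q2 (x : Octonion) : (conj x).q2 = -x.q2 := rfl

lemma normSq_nonneg (x : Octonion) : 0 ≤ normSq x :=
  add_nonneg Quaternion.normSq_nonneg Quaternion.normSq_nonneg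

lemma normSq_conj (x : Octonion) : normSq (conj x) = normSq x := by
  simp only [normSq, conj_q1, conj_q2, normSq_star, normSq_neg]

lemma normSq_mul (x y : Octonion) : normSq (x * y) = normSq x * normSq y := by
  simp only [normSq, mul_q1, mul_q2, normSq_def', re_add, re_sub, re_mul, re_star, imI_add,
    imI_sub, imI_mul, imI_star, imJ_add, imJ_sub, imJ_mul, imJ_star, imK_add, imK_sub, imK_mul,
    imK_star]
  ring

lemma re_mul_mul_cycle (a b c : Octonion) : re (a * b * c) = re (b * (c * a)) := by
  simp only [re, mul_q1, mul_q2, re_add, re_sub, re_mul, re_star, imI_add, imI_sub, imI_mul,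
    imI_star, imJ_add, imJ_sub, imJ_mul, imJ_star, imK_add, imK_sub, imK_mul, imK_star]
  ring

lemma normSq_smul_conj_add (t : ℝ) (x y : Octonion) :
    normSq (t • conj x + y) = t ^ 2 * normSq x + 2 * t * re (x * y) + normSq y := by
  simp only [normSq, re, add_q1, add_q2, smul_q1, smul_q2, conj_q1, conj_q2, mul_q1, normSq_def',
    re_add, re_sub, re_neg, re_smul, re_mul, re_star, imI_add, imI_neg, imI_smul, imI_star,
    imJ_add, imJ_neg, imJ_smul, imJ_star, imK_add, imK_neg, imK_smul, imK_star, smul_neg,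
    smul_eq_mul]
  ring

lemma re_mul_sq_le (x y : Octonion) : re (x * y) ^ 2 ≤ normSq x * normSq y := by
  have h : discrim (normSq x) (2 * re (x * y)) (normSq y) ≤ 0 := discrim_le_zero fun t => by
    linarith [normSq_nonneg (t • conj x + y), normSq_smul_conj_add t x y]
  rw [discrim] at h
  linarith

end Octonion

lemma neg_two_mul_le_add_of_sq_le_mul {r a b : ℝ} (ha : 0 ≤ a) (hb : 0 ≤ b) (h : r ^ 2 ≤ a * b) :
    -(2 * r) ≤ a + b := by
  nlinarith [sq_nonneg (a - b)]

open Octonion in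
/-- For any `ξ ∈ O²` the matrix `ξ ⊗ ξ* = (conj(ξ_j) ξ_k)` is nonnegative
definite: `Re(η* (ξ⊗ξ*) η) ≥ 0` for all `η ∈ O²`. -/
theorem herm2_rankOne_nonneg (ξ₁ ξ₂ : Octonion) :
    ∀ η₁ η₂ : Octonion,
      0 ≤ normSq ξ₁ * normSq η₁ + normSq ξ₂ * normSq η₂ +
          2 * re ((conj η₁ * (conj ξ₁ * ξ₂)) * η₂) := by
  intro η₁ η₂
  rw [re_mul_mul_cycle]
  have hcs := re_mul_sq_le (conj ξ₁ * ξ₂) (η₂ * conj η₁)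
  rw [normSq_mul, normSq_mul, normSq_conj, normSq_conj] at hcs
  have hamgm := neg_two_mul_le_add_of_sq_le_mul
    (mul_nonneg (normSq_nonneg ξ₁) (normSq_nonneg η₁))
    (mul_nonneg (normSq_nonneg ξ₂) (normSq_nonneg η₂)) (hcs.trans_eq (by ring))
  linarith
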